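/- In the presented group ⟨x, y, z ∣ x² = y² = z² = 1, xyx = yxy, yzy = zyz, zxz = xzx⟩, each of the elements Q_X = x·y·z·x, Q_Y = y·z·x·y and Q_Z = z·x·y·z has order exactly 3. -/

import Mathlib

/-- The generator `x` as an element of the free group on three generators. -/
def xGen : FreeGroup (Fin 3) := FreeGroup.of 0

/-- The generator `y` as an element of the free group on three generators. -/
def yGen : FreeGroup (Fin 3) := FreeGroup.of 1

/-- The generator `z` as an element of the free group on three generators. -/
def zGen : FreeGroup (Fin 3) := FreeGroup.of 2

/-- Relators for the group ⟨x, y, z ∣ x² = y² = z² = 1,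
xyx = yxy, yzy = zyz, zxz = xzx⟩ (the relations (7.1) of the paper). -/
def rels3 : Set (FreeGroup (Fin 3)) :=
  {xGen ^ 2, yGen ^ 2, zGen ^ 2,
   (xGen * yGen * xGen) * (yGen * xGen * yGen)⁻¹,
   (yGen * zGen * yGen) * (zGen * yGen * zGen)⁻¹,
   (zGen * xGen * zGen) * (xGen * zGen * xGen)⁻¹}

/-- The image of `x` in the presented group. -/
def X : PresentedGroup rels3 := PresentedGroup.of 0

/-- The image of `y` in the presented group. -/
def Y : PresentedGroup rels3 := PresentedGroup.of 1

/-- The image of `z` in the presented group. -/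
def Z : PresentedGroup rels3 := PresentedGroup.of 2


/-!
The relations say that `x`, `y`, `z` are involutions any two of which satisfy the braid relation.
For two such involutions, `(yz)³ = (yzy)(zyz) = (yzy)² = 1`, and `Q_X = x (yz) x` is a conjugate
of `yz` because `x = x⁻¹`; likewise `Q_Y` and `Q_Z` are conjugates of `zx` and `xy`. So all three
have order dividing 3, and they are nontrivial because `x, y, z ↦ (0 1), (1 2), (0 2)` defines a
homomorphism onto `S₃` sending each of `yz`, `zx`, `xy` to a 3-cycle.
-/

section Involutions

variable {G : Type*} [Group G] {x y z : G}

theorem orderOf_mul_mul_eq_of_mul_self_eq_one (hx : x * x = 1) (w : G) :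
    orderOf (x * w * x) = orderOf w :=
  (SemiconjBy.orderOf_eq x <| by simp only [SemiconjBy, mul_assoc, hx, mul_one]).symm

theorem mul_pow_three_eq_one_of_braid (hy : y * y = 1) (hz : z * z = 1)
    (h : y * z * y = z * y * z) : (y * z) ^ 3 = 1 :=
  calc (y * z) ^ 3 = y * z * y * (z * y * z) := by
        simp only [pow_succ, pow_zero, one_mul, mul_assoc]
    _ = y * z * y * (y * z * y) := by rw [h]
    _ = y * (z * (y * y) * z) * y := by group
    _ = 1 := by rw [hy, mul_one, hz, mul_one, hy]

theorem orderOf_mul_eq_three_of_braid (hy : y * y = 1) (hz : z * z = 1)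
    (h : y * z * y = z * y * z) (hyz : y * z ≠ 1) : orderOf (y * z) = 3 :=
  orderOf_eq_prime (mul_pow_three_eq_one_of_braid hy hz h) hyz

end Involutions

namespace PresentedGroup

variable {α : Type*} {rels : Set (FreeGroup α)} {a b : α}

theorem of_mul_self_eq_one (h : FreeGroup.of a ^ 2 ∈ rels) :
    (of a : PresentedGroup rels) * of a = 1 := by
  simpa only [of, pow_two, map_mul] using one_of_mem h

theorem of_braid (h : FreeGroup.of a * FreeGroup.of b * FreeGroup.of a *
      (FreeGroup.of b * FreeGroup.of a * FreeGroup.of b)⁻¹ ∈ rels) :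
    (of a : PresentedGroup rels) * of b * of a = of b * of a * of b := by
  simpa only [of, map_mul] using mk_eq_mk_of_mul_inv_mem h

end PresentedGroup

open PresentedGroup

theorem X_mul_self : X * X = 1 := of_mul_self_eq_one (by simp [rels3, xGen])
theorem Y_mul_self : Y * Y = 1 := of_mul_self_eq_one (by simp [rels3, yGen])
theorem Z_mul_self : Z * Z = 1 := of_mul_self_eq_one (by simp [rels3, zGen])

theorem X_Y_braid : X * Y * X = Y * X * Y := of_braid (by simp [rels3, xGen, yGen])
theorem Y_Z_braid : Y * Z * Y = Z * Y * Z := of_braid (by simp [rels3, yGen, zGen])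
theorem Z_X_braid : Z * X * Z = X * Z * X := of_braid (by simp [rels3, zGen, xGen])

def toPerm : PresentedGroup rels3 →* Equiv.Perm (Fin 3) :=
  toGroup (f := ![Equiv.swap 0 1, Equiv.swap 1 2, Equiv.swap 0 2]) <| by
    simp only [rels3, xGen, yGen, zGen, Set.mem_insert_iff, Set.mem_singleton_iff,
      forall_eq_or_imp, forall_eq, map_mul, map_pow, map_inv, FreeGroup.lift_apply_of]
    decide

theorem toPerm_X : toPerm X = Equiv.swap 0 1 := toGroup.of _
theorem toPerm_Y : toPerm Y = Equiv.swap 1 2 := toGroup.of _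
theorem toPerm_Z : toPerm Z = Equiv.swap 0 2 := toGroup.of _

theorem orderOf_X_mul_Y : orderOf (X * Y) = 3 :=
  orderOf_mul_eq_three_of_braid X_mul_self Y_mul_self X_Y_braid <|
    ne_one_of_map (f := toPerm) <| by rw [map_mul, toPerm_X, toPerm_Y]; decide

theorem orderOf_Y_mul_Z : orderOf (Y * Z) = 3 :=
  orderOf_mul_eq_three_of_braid Y_mul_self Z_mul_self Y_Z_braid <|
    ne_one_of_map (f := toPerm) <| by rw [map_mul, toPerm_Y, toPerm_Z]; decide

theorem orderOf_Z_mul_X : orderOf (Z * X) = 3 :=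
  orderOf_mul_eq_three_of_braid Z_mul_self X_mul_self Z_X_braid <|
    ne_one_of_map (f := toPerm) <| by rw [map_mul, toPerm_Z, toPerm_X]; decide

/-- In ⟨x, y, z ∣ x² = y² = z² = 1, xyx = yxy, yzy = zyz, zxz = xzx⟩, each of
`Q_X = xyzx`, `Q_Y = yzxy`, `Q_Z = zxyz` has order exactly 3. -/
theorem orderOf_QX_QY_QZ_eq_three :
    orderOf (X * Y * Z * X) = 3 ∧ orderOf (Y * Z * X * Y) = 3 ∧
      orderOf (Z * X * Y * Z) = 3 := by
  simp only [mul_assoc X Y Z, mul_assoc Y Z X, mul_assoc Z X Y,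
    orderOf_mul_mul_eq_of_mul_self_eq_one X_mul_self,
    orderOf_mul_mul_eq_of_mul_self_eq_one Y_mul_self,
    orderOf_mul_mul_eq_of_mul_self_eq_one Z_mul_self]
  exact ⟨orderOf_Y_mul_Z, orderOf_Z_mul_X, orderOf_X_mul_Y⟩
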